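/- arXiv:1407.7593 — 3 statements merged into one kernel-verified Lean document; each statement's English description precedes it below -/
import Mathlib

section
/- In the polynomial ring quotient R(n) = Q[x_1,...,x_n]/(e_1,...,e_n), where e_i denotes the i-th elementary symmetric polynomial in x_1,...,x_n, the identity (1 - x_1 t)^{-1} ··· (1 - x_d t)^{-1} = (1 - x_{d+1} t) ··· (1 - x_n t) holds in R(n)[[t]] for any 0 ≤ d ≤ n. -/
/-!
Expanding `∏ᵢ (1 - xᵢ t)` gives `∑ₖ (-1)ᵏ eₖ(x) tᵏ`, which is `1` once `e₁, …, eₙ` vanish. Hence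
the products over `i < d` and over `i ≥ d` are mutually inverse.
-/

open MvPolynomial

theorem MvPolynomial.prod_one_add_mul_eq_sum_esymm {σ R A : Type*} [Fintype σ] [CommSemiring R]
    [CommSemiring A] (φ : MvPolynomial σ R →+* A) (y : A) :
    ∏ i, (1 + φ (X i) * y) = ∑ k ∈ Finset.range (Fintype.card σ + 1), φ (esymm σ R k) * y ^ k := by
  rw [Finset.prod_one_add, Finset.sum_powerset, Finset.card_univ]
  refine Finset.sum_congr rfl fun k _ => ?_
  rw [esymm, map_sum, Finset.sum_mul]
  refine Finset.sum_congr rfl fun t ht => ?_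
  rw [Finset.prod_mul_distrib, Finset.prod_const, map_prod, (Finset.mem_powersetCard.mp ht).2]

theorem MvPolynomial.prod_one_sub_mul_eq_one {σ R A : Type*} [Fintype σ] [CommSemiring R]
    [CommRing A] (φ : MvPolynomial σ R →+* A)
    (hφ : ∀ k, 1 ≤ k → k ≤ Fintype.card σ → φ (esymm σ R k) = 0) (y : A) :
    ∏ i, (1 - φ (X i) * y) = 1 := by
  simp_rw [sub_eq_add_neg, ← mul_neg]
  rw [prod_one_add_mul_eq_sum_esymm, Finset.sum_eq_single_of_mem 0 (by simp)]
  · simp [esymm_zero]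
  · intro k hk hk0
    rw [hφ k (Nat.one_le_iff_ne_zero.mpr hk0) (Nat.lt_succ_iff.mp (Finset.mem_range.mp hk)),
      zero_mul]

theorem MvPolynomial.esymm_mem_span_esymm {n : ℕ} (R : Type*) [CommSemiring R] {k : ℕ}
    (hk₁ : 1 ≤ k) (hkn : k ≤ n) :
    esymm (Fin n) R k ∈ Ideal.span (Set.range fun i : Fin n => esymm (Fin n) R ((i : ℕ) + 1)) :=
  Ideal.subset_span ⟨⟨k - 1, by omega⟩, by simp only [Nat.sub_add_cancel hk₁]⟩

theorem Ring.inverse_eq_of_mul_eq_one {M : Type*} [CommMonoidWithZero M] {x y : M}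
    (h : x * y = 1) : Ring.inverse x = y :=
  Ring.inverse_unit (Units.mkOfMulEqOne x y h)

theorem stmt0_general (n : ℕ) (d : ℕ)
    (I : Ideal (MvPolynomial (Fin n) ℚ))
    (hI : I = Ideal.span (Set.range fun i : Fin n => esymm (Fin n) ℚ ((i : ℕ) + 1))) :
    Ring.inverse
        (∏ i ∈ Finset.univ.filter (fun i : Fin n => (i : ℕ) < d),
          (1 - PowerSeries.C (Ideal.Quotient.mk I (X i)) *
            PowerSeries.X)) =
      ∏ i ∈ Finset.univ.filter (fun i : Fin n => d ≤ (i : ℕ)),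
        (1 - PowerSeries.C (Ideal.Quotient.mk I (X i)) *
          PowerSeries.X) := by
  apply Ring.inverse_eq_of_mul_eq_one
  simp_rw [← not_lt]
  rw [Finset.prod_filter_mul_prod_filter_not]
  refine prod_one_sub_mul_eq_one (PowerSeries.C.comp (Ideal.Quotient.mk I)) (fun k hk₁ hkn => ?_) _
  have hmem : esymm (Fin n) ℚ k ∈ I := hI ▸ esymm_mem_span_esymm ℚ hk₁ (by simpa using hkn)
  rw [RingHom.comp_apply, Ideal.Quotient.eq_zero_iff_mem.mpr hmem, map_zero]

/-- In `R(n) = ℚ[x₁,…,xₙ]/(e₁,…,eₙ)`, the identity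
`∏_{i≤d} (1 - xᵢ t)⁻¹ = ∏_{i>d} (1 - xᵢ t)` holds in `R(n)[[t]]`. -/
theorem stmt0 (n : ℕ) (hn : 0 < n) (d : ℕ) (hd : d ≤ n)
    (I : Ideal (MvPolynomial (Fin n) ℚ))
    (hI : I = Ideal.span (Set.range fun i : Fin n => esymm (Fin n) ℚ ((i : ℕ) + 1))) :
    Ring.inverse
        (∏ i ∈ Finset.univ.filter (fun i : Fin n => (i : ℕ) < d),
          (1 - PowerSeries.C (Ideal.Quotient.mk I (X i)) *
            PowerSeries.X)) =
      ∏ i ∈ Finset.univ.filter (fun i : Fin n => d ≤ (i : ℕ)),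
        (1 - PowerSeries.C (Ideal.Quotient.mk I (X i)) *
          PowerSeries.X) :=
  stmt0_general n d I hI
end

section
/- In the quotient ring R(n) = Q[x_1,...,x_n]/(e_1,...,e_n), for every r ≥ 0 and 0 ≤ d ≤ n, the complete homogeneous symmetric polynomial satisfies h_r(x_1,...,x_d) = (-1)^r e_r(x_{d+1},...,x_n). -/
open MvPolynomial

/- In `ℚ[x₁,…,xₙ] ⧸ (e₁,…,eₙ)` every elementary symmetric polynomial of positive degree
vanishes, so `∏ᵢ (1 - xᵢ t) = ∑ₖ (-1)ᵏ eₖ tᵏ = 1` as a power series in `t`. Splitting the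
variables into `S = {x₁,…,x_d}` and `T = {x_{d+1},…,xₙ}` gives `∏_S (1 - xᵢ t) * ∏_T (1 - xᵢ t) = 1`.
On the other hand `∏_S (1 - xᵢ t)` is inverted by the generating series `∑ᵣ hᵣ(S) tʳ`,
so `∑ᵣ hᵣ(S) tʳ = ∏_T (1 - xᵢ t) = ∑ᵣ (-1)ʳ eᵣ(T) tʳ`; compare coefficients. -/

/-- The `r`-th elementary symmetric polynomial in the variables indexed by `s`. -/
noncomputable def esub (n : ℕ) (s : Finset (Fin n)) (r : ℕ) : MvPolynomial (Fin n) ℚ :=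
  ∑ A ∈ s.powersetCard r, ∏ i ∈ A, X i

/-- The `r`-th complete homogeneous symmetric polynomial in the variables indexed by `s`. -/
noncomputable def hsub (n : ℕ) (s : Finset (Fin n)) (r : ℕ) : MvPolynomial (Fin n) ℚ :=
  ∑ m ∈ s.sym r, (Multiset.map X (m : Multiset (Fin n))).prod

namespace Finset

variable {ι : Type*} [DecidableEq ι]

theorem sym_insert_succ (a : ι) (s : Finset ι) (k : ℕ) :
    (insert a s).sym (k + 1) = s.sym (k + 1) ∪ ((insert a s).sym k).image (Sym.cons a) := by
  ext m
  simp only [mem_union, mem_image, mem_sym_iff, mem_insert]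
  constructor
  · intro h
    by_cases ham : a ∈ m
    · obtain ⟨m', rfl⟩ := Sym.exists_cons_of_mem ham
      exact Or.inr ⟨m', fun b hb => h b (Sym.mem_cons_of_mem hb), rfl⟩
    · exact Or.inl fun b hb => (h b hb).resolve_left fun hba => ham (hba ▸ hb)
  · rintro (h | ⟨m', h, rfl⟩) b hb
    · exact Or.inr (h b hb)
    · exact (Sym.mem_cons.mp hb).elim Or.inl (h b)

theorem sum_sym_insert_succ {M : Type*} [AddCommMonoid M] {a : ι} {s : Finset ι} (ha : a ∉ s)
    (k : ℕ) (f : Sym ι (k + 1) → M) :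
    ∑ m ∈ (insert a s).sym (k + 1), f m =
      ∑ m ∈ s.sym (k + 1), f m + ∑ m ∈ (insert a s).sym k, f (a ::ₛ m) := by
  have hdisj : Disjoint (s.sym (k + 1)) (((insert a s).sym k).image (Sym.cons a)) := by
    simp only [disjoint_left, mem_image, mem_sym_iff]
    rintro _ hm ⟨m, -, rfl⟩
    exact ha (hm a (Sym.mem_cons_self a m))
  rw [sym_insert_succ, sum_union hdisj,
    sum_image fun m _ m' _ h => (Sym.cons_inj_right a m m').mp h]

end Finset

theorem PowerSeries.coeff_prod_one_sub_C_mul_X {ι R : Type*} [CommRing R] (s : Finset ι)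
    (c : ι → R) (k : ℕ) :
    coeff k (∏ i ∈ s, (1 - C (c i) * X)) = (-1) ^ k * (s.val.map c).esymm k := by
  classical
  simp_rw [sub_eq_add_neg, Finset.prod_one_add, Finset.esymm_map_val,
    Finset.powersetCard_eq_filter, Finset.sum_filter, Finset.mul_sum, map_sum]
  refine Finset.sum_congr rfl fun t _ => ?_
  simp_rw [← neg_mul, ← map_neg, Finset.prod_mul_distrib, Finset.prod_const, ← map_prod,
    coeff_C_mul_X_pow, Finset.prod_neg]
  split_ifs <;> simp_all

theorem PowerSeries.prod_one_sub_C_mul_X_eq_one {ι R : Type*} [Fintype ι] [CommRing R]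
    (c : ι → R) (hc : ∀ k, 1 ≤ k → (Finset.univ.val.map c).esymm k = 0) :
    ∏ i, (1 - C (c i) * X) = 1 := by
  ext (_ | k) <;> rw [coeff_prod_one_sub_C_mul_X, coeff_one]
  · simp [Multiset.esymm]
  · simp [hc]

section CompleteHomogeneous

variable {ι R : Type*} [DecidableEq ι]

noncomputable def hsymmOn [CommSemiring R] (s : Finset ι) (c : ι → R) (k : ℕ) : R :=
  ∑ m ∈ s.sym k, ((m : Multiset ι).map c).prod

section CommSemiring

variable [CommSemiring R] (c : ι → R)

@[simp]
theorem hsymmOn_zero (s : Finset ι) : hsymmOn s c 0 = 1 := by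
  rw [hsymmOn, Finset.sym_zero, Finset.sum_singleton]
  rfl

theorem hsymmOn_insert_succ {a : ι} {s : Finset ι} (ha : a ∉ s) (k : ℕ) :
    hsymmOn (insert a s) c (k + 1) = hsymmOn s c (k + 1) + c a * hsymmOn (insert a s) c k := by
  simp only [hsymmOn, Finset.sum_sym_insert_succ ha, Finset.mul_sum, Sym.coe_cons,
    Multiset.map_cons, Multiset.prod_cons]

theorem map_hsymmOn {S : Type*} [CommSemiring S] (s : Finset ι) (f : R →+* S) (k : ℕ) :
    f (hsymmOn s c k) = hsymmOn s (f ∘ c) k := by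
  simp [hsymmOn, map_multiset_prod, Multiset.map_map]

end CommSemiring

theorem PowerSeries.prod_one_sub_C_mul_X_mul_mk_hsymmOn [CommRing R] (s : Finset ι) (c : ι → R) :
    (∏ i ∈ s, (1 - C (c i) * X)) * mk (hsymmOn s c) = 1 := by
  induction s using Finset.induction_on with
  | empty =>
    ext (_ | k)
    · simp
    · simp [coeff_one, hsymmOn]
  | @insert a s ha ih =>
    have hstep : (1 - C (c a) * X) * mk (hsymmOn (insert a s) c) = mk (hsymmOn s c) := by
      ext (_ | k)
      · simp [sub_mul, mul_assoc]
      · simp [sub_mul, mul_assoc, coeff_succ_X_mul, hsymmOn_insert_succ c ha]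
    rw [Finset.prod_insert ha, mul_comm (1 - _), mul_assoc, hstep, ih]

end CompleteHomogeneous

theorem esymm_mem_span_range_esymm {R : Type*} [CommRing R] {n k : ℕ} (hk : 1 ≤ k) :
    esymm (Fin n) R k ∈ Ideal.span (Set.range fun i : Fin n => esymm (Fin n) R (i + 1)) := by
  by_cases hkn : k ≤ n
  · exact Ideal.subset_span ⟨⟨k - 1, by omega⟩, by simp only; congr; omega⟩
  · rw [esymm, Finset.powersetCard_eq_empty.2 (by simpa using hkn), Finset.sum_empty]
    exact zero_mem _

theorem esymm_map_mk_X_eq_zero {σ R : Type*} [Fintype σ] [CommRing R]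
    {I : Ideal (MvPolynomial σ R)} (hI : ∀ k, 1 ≤ k → esymm σ R k ∈ I) {k : ℕ} (hk : 1 ≤ k) :
    (Finset.univ.val.map fun i => Ideal.Quotient.mk I (X i)).esymm k = 0 := by
  change (Finset.univ.val.map (Ideal.Quotient.mkₐ R I ∘ X)).esymm k = 0
  rw [← aeval_esymm_eq_multiset_esymm σ R, ← aeval_unique, Ideal.Quotient.mkₐ_eq_mk,
    Ideal.Quotient.eq_zero_iff_mem]
  exact hI k hk

theorem stmt1_general (n : ℕ) (d : ℕ) (r : ℕ)
    (I : Ideal (MvPolynomial (Fin n) ℚ))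
    (hI : I = Ideal.span (Set.range fun i : Fin n => esymm (Fin n) ℚ ((i : ℕ) + 1))) :
    Ideal.Quotient.mk I (hsub n (Finset.univ.filter (fun i : Fin n => (i : ℕ) < d)) r) =
      (-1) ^ r *
        Ideal.Quotient.mk I (esub n (Finset.univ.filter (fun i : Fin n => d ≤ (i : ℕ))) r) := by
  have hesymm : ∀ k, 1 ≤ k → esymm (Fin n) ℚ k ∈ I := hI ▸ fun _ => esymm_mem_span_range_esymm
  set c := fun i : Fin n => Ideal.Quotient.mk I (X i)
  have hsplit := Finset.prod_filter_mul_prod_filter_not Finset.univ (fun i : Fin n => (i : ℕ) < d)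
    fun i => 1 - PowerSeries.C (c i) * PowerSeries.X
  simp only [not_lt, PowerSeries.prod_one_sub_C_mul_X_eq_one c
    fun k => esymm_map_mk_X_eq_zero hesymm] at hsplit
  have hinv := left_inv_eq_right_inv ((mul_comm _ _).trans hsplit)
    (PowerSeries.prod_one_sub_C_mul_X_mul_mk_hsymmOn _ c)
  have hcoeff := congrArg (PowerSeries.coeff r) hinv
  rw [PowerSeries.coeff_prod_one_sub_C_mul_X, PowerSeries.coeff_mk] at hcoeff
  have hmk_hsub (s : Finset (Fin n)) : Ideal.Quotient.mk I (hsub n s r) = hsymmOn s c r :=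
    map_hsymmOn X s _ r
  have hmk_esub (s : Finset (Fin n)) : Ideal.Quotient.mk I (esub n s r) = (s.val.map c).esymm r := by
    simp [esub, Finset.esymm_map_val, c]
  rw [hmk_hsub, hmk_esub, hcoeff]

/-- in `R(n) = ℚ[x₁,…,xₙ]/(e₁,…,eₙ)`, for every `r ≥ 0` and `0 ≤ d ≤ n`,
`h_r(x_1,…,x_d) = (-1)^r e_r(x_{d+1},…,x_n)`. -/
theorem stmt1 (n : ℕ) (hn : 0 < n) (d : ℕ) (hd : d ≤ n) (r : ℕ)
    (I : Ideal (MvPolynomial (Fin n) ℚ))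
    (hI : I = Ideal.span (Set.range fun i : Fin n => esymm (Fin n) ℚ ((i : ℕ) + 1))) :
    Ideal.Quotient.mk I (hsub n (Finset.univ.filter (fun i : Fin n => (i : ℕ) < d)) r) =
      (-1) ^ r *
        Ideal.Quotient.mk I (esub n (Finset.univ.filter (fun i : Fin n => d ≤ (i : ℕ))) r) :=
  stmt1_general n d r I hI
end

section
/- With H = [α_0^+, ∂_0^R] on Λ*(V), define S_i = (∂_i^R − [H, ∂_i^R]/2)/2. Then on a degree-k monomial P containing φ_i with k odd, S_i(P) = ∂_i^R(P), and S_i(P) = 0 whenever k is even or φ_i does not appear in P. -/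
/-- The fermionic model of the exterior algebra `Λ*(V)` of an `n`-dimensional space with
basis `φ_0, …, φ_{n-1}`: the basis monomial `φ_{k_1} ∧ ⋯ ∧ φ_{k_d}` (`k_1 < ⋯ < k_d`)
corresponds to the indicator function of the set `{k_1, …, k_d}`. -/
abbrev ExtV (n : ℕ) : Type := Finset (Fin n) → ℚ

/-- The basis monomial `φ_{k_1} ∧ ⋯ ∧ φ_{k_d}` corresponding to the set `T = {k_1,…,k_d}`. -/
noncomputable def mono (n : ℕ) (T : Finset (Fin n)) : ExtV n := Pi.single T 1

/-- The left wedge (creation) operator `α_i⁺ : v ↦ φ_i ∧ v` on basis monomials. -/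
noncomputable def wedgeOp (n : ℕ) (i : Fin n) : Module.End ℚ (ExtV n) where
  toFun f S := if i ∈ S then (-1 : ℚ) ^ ((S.filter (· < i)).card) * f (S.erase i) else 0
  map_add' f g := by funext S; by_cases h : i ∈ S <;> simp [h, mul_add]
  map_smul' c f := by
    funext S; by_cases h : i ∈ S <;> simp [h, Pi.smul_apply, smul_eq_mul]; ring

/-- The left partial derivative `∂_i^L`: on a sorted basis monomial containing `φ_i` as its
`s`-th factor it gives `(-1)^{s-1}` times the monomial with `φ_i` removed, else `0`. -/
noncomputable def delL (n : ℕ) (i : Fin n) : Module.End ℚ (ExtV n) where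
  toFun f S := if i ∈ S then 0 else (-1 : ℚ) ^ ((S.filter (· < i)).card) * f (insert i S)
  map_add' f g := by funext S; by_cases h : i ∈ S <;> simp [h, mul_add]
  map_smul' c f := by
    funext S; by_cases h : i ∈ S <;> simp [h, Pi.smul_apply, smul_eq_mul]; ring

/-- The right partial derivative `∂_i^R`: on a sorted degree-`d` basis monomial containing
`φ_i` as its `s`-th factor it gives `(-1)^{d-s}` times the monomial with `φ_i` removed,
else `0`. -/
noncomputable def delR (n : ℕ) (i : Fin n) : Module.End ℚ (ExtV n) where
  toFun f S := if i ∈ S then 0 else (-1 : ℚ) ^ ((S.filter (i < ·)).card) * f (insert i S)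
  map_add' f g := by funext S; by_cases h : i ∈ S <;> simp [h, mul_add]
  map_smul' c f := by
    funext S; by_cases h : i ∈ S <;> simp [h, Pi.smul_apply, smul_eq_mul]; ring

/-! `H = [α_0⁺, ∂_0^R]` is minus the grading sign `(-1)^deg`, which anticommutes with `∂_i^R`.
Hence `[H, ∂_i^R] = 2 ∂_i^R (-1)^deg`, so `S_i = ∂_i^R ∘ (1 - (-1)^deg)/2` is `∂_i^R` preceded
by the projection onto odd degree. -/

open Finset

theorem card_filter_lt_add_card_filter_gt {α : Type*} [LinearOrder α] {s : Finset α} {a : α}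
    (ha : a ∉ s) : #(s.filter (· < a)) + #(s.filter (a < ·)) = #s := by
  rw [← card_union_of_disjoint (disjoint_filter.2 fun _ _ h h' => lt_asymm h h')]
  congr 1
  ext x
  simp only [mem_union, mem_filter, ← and_or_left, and_iff_left_iff_imp]
  exact fun hx => lt_or_gt_of_ne (ne_of_mem_of_not_mem hx ha)

noncomputable def gradeSign (n : ℕ) : Module.End ℚ (ExtV n) where
  toFun f S := (-1 : ℚ) ^ #S * f S
  map_add' f g := by funext S; simp [mul_add]
  map_smul' c f := by funext S; simp only [Pi.smul_apply, smul_eq_mul, RingHom.id_apply]; ring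

theorem gradeSign_apply (n : ℕ) (f : ExtV n) (S : Finset (Fin n)) :
    gradeSign n f S = (-1 : ℚ) ^ #S * f S := rfl

theorem gradeSign_mono (n : ℕ) (T : Finset (Fin n)) :
    gradeSign n (mono n T) = (-1 : ℚ) ^ #T • mono n T := by
  funext S
  by_cases h : S = T
  · subst h; rfl
  · simp [gradeSign_apply, mono, h]

theorem delR_mono_of_notMem {n : ℕ} {i : Fin n} {T : Finset (Fin n)} (hi : i ∉ T) :
    delR n i (mono n T) = 0 := by
  funext S
  have hST : insert i S ≠ T := fun h => hi (h ▸ mem_insert_self i S)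
  simp [delR, mono, hST]

/-- The signs `(-1)^{#(S < i)}` and `(-1)^{#(S > i)}` of the two factors combine to
`(-1)^{|S|}`. -/
theorem wedgeOp_mul_delR_sub_delR_mul_wedgeOp (n : ℕ) (i : Fin n) :
    wedgeOp n i * delR n i - delR n i * wedgeOp n i = -gradeSign n := by
  refine LinearMap.ext fun f => funext fun S => ?_
  simp only [LinearMap.sub_apply, Pi.sub_apply, Module.End.mul_apply, LinearMap.neg_apply,
    Pi.neg_apply, gradeSign_apply, wedgeOp, delR, LinearMap.coe_mk, AddHom.coe_mk]
  by_cases hS : i ∈ S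
  · obtain ⟨T, hT, rfl⟩ : ∃ T, i ∉ T ∧ S = insert i T :=
      ⟨S.erase i, notMem_erase i S, (insert_erase hS).symm⟩
    rw [if_pos hS, if_pos hS, erase_insert hT, if_neg hT,
      filter_insert, if_neg (lt_irrefl i), card_insert_of_notMem hT,
      ← card_filter_lt_add_card_filter_gt hT]
    ring
  · rw [if_neg hS, if_neg hS, if_pos (mem_insert_self i S), erase_insert hS,
      filter_insert, if_neg (lt_irrefl i), ← card_filter_lt_add_card_filter_gt hS]
    ring

theorem gradeSign_mul_delR (n : ℕ) (i : Fin n) :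
    gradeSign n * delR n i = -(delR n i * gradeSign n) := by
  refine LinearMap.ext fun f => funext fun S => ?_
  simp only [Module.End.mul_apply, LinearMap.neg_apply, Pi.neg_apply, gradeSign_apply, delR,
    LinearMap.coe_mk, AddHom.coe_mk]
  by_cases hS : i ∈ S
  · simp [hS]
  · rw [if_neg hS, if_neg hS, card_insert_of_notMem hS]
    ring

/-- with `H = [α_0⁺, ∂_0^R]` and `S_i = (∂_i^R - [H, ∂_i^R]/2)/2`: on a
degree-`k` basis monomial `P` containing `φ_i` with `k` odd, `S_i(P) = ∂_i^R(P)`, and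
`S_i(P) = 0` whenever `k` is even or `φ_i` does not appear in `P`. -/
theorem stmt14 (n : ℕ) (hn : 0 < n) (i : Fin n)
    (H : Module.End ℚ (ExtV n))
    (hH : H = wedgeOp n ⟨0, hn⟩ * delR n ⟨0, hn⟩ - delR n ⟨0, hn⟩ * wedgeOp n ⟨0, hn⟩)
    (Si : Module.End ℚ (ExtV n))
    (hSi : Si = (2⁻¹ : ℚ) • (delR n i - (2⁻¹ : ℚ) • (H * delR n i - delR n i * H)))
    (T : Finset (Fin n)) :
    (Odd T.card → i ∈ T → Si (mono n T) = delR n i (mono n T)) ∧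
    (Even T.card ∨ i ∉ T → Si (mono n T) = 0) := by
  have hSi_mono : Si (mono n T) = (2⁻¹ * (1 - (-1 : ℚ) ^ #T)) • delR n i (mono n T) := by
    have hcomm : H * delR n i - delR n i * H = (2 : ℚ) • (delR n i * gradeSign n) := by
      rw [hH, wedgeOp_mul_delR_sub_delR_mul_wedgeOp, neg_mul (gradeSign n), mul_neg (delR n i), gradeSign_mul_delR]
      module
    rw [hSi, hcomm]
    simp only [LinearMap.smul_apply, LinearMap.sub_apply, Module.End.mul_apply, gradeSign_mono,
      map_smul]
    module
  refine ⟨fun hodd _ => by rw [hSi_mono, hodd.neg_one_pow]; module, ?_⟩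
  rintro (heven | hi)
  · rw [hSi_mono, heven.neg_one_pow]; simp
  · rw [hSi_mono, delR_mono_of_notMem hi, smul_zero]
end
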